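/- Let x_n = 1/2ⁿ for all n ∈ ℕ, and let (y_n) be a sequence of real numbers such that ∑_n y_n is absolutely convergent and for all n ∈ ℕ, y_n ≠ ∑_{i>n} y_i. Then E(x_n, y_n) is a Cantor set, i.e. it is nonempty, compact, perfect and totally disconnected. -/

import Mathlib

/-- The achievement set of a sequence: the set of all subsums. -/
def achievementSet {E : Type*} [AddCommMonoid E] [TopologicalSpace E] (f : ℕ → E) : Set E :=
  {s | ∃ A : Set ℕ, s = ∑' n : A, f n}

/-!
The achievement set is the image of the Cantor space `ℕ → Bool` under the continuous map
`b ↦ ∑_{b n} (1 / 2 ^ (n + 1), y n)`. This map is injective: if `a ≠ b` have equal images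
and `n` is the first index where they differ, say `a n = 1`, then equality of the first coordinates
forces the binary digits `1000…` for `a` and `0111…` for `b` from position `n` on, and equality
of the second coordinates then reads `y n = ∑_{i > n} y i`. A continuous injection of the compact,
perfect, totally disconnected Cantor space into `ℝ²` is a closed embedding, so its range
inherits these properties.
-/

open Filter Topology Set Function

instance Pi.perfectSpace_of_infinite {ι α : Type*} [Infinite ι] [TopologicalSpace α]
    [Nontrivial α] : PerfectSpace (ι → α) := by
  classical
  refine ⟨fun b _ => accPt_iff_nhds.2 fun U hU => ?_⟩
  choose c hc using fun i => exists_ne (b i)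
  have hlim : Tendsto (fun i => update b i (c i)) cofinite (𝓝 b) :=
    tendsto_pi_nhds.2 fun j => tendsto_const_nhds.congr'
      ((eventually_cofinite_ne j).mono fun i hi => (update_of_ne hi.symm _ _).symm)
  obtain ⟨i, hi⟩ := (hlim.eventually hU).exists
  exact ⟨_, ⟨hi, mem_univ _⟩, fun h => hc i (by simpa using congrFun h i)⟩

theorem preperfect_range_of_injective {X Y : Type*} [TopologicalSpace X] [PerfectSpace X]
    [TopologicalSpace Y] {g : X → Y} (hg : Continuous g) (hinj : Injective g) :
    Preperfect (range g) := by
  rintro _ ⟨x, rfl⟩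
  refine accPt_iff_nhds.2 fun U hU => ?_
  obtain ⟨x', ⟨hx'U, -⟩, hne⟩ :=
    accPt_iff_nhds.1 (PerfectSpace.univ_preperfect x (mem_univ x)) _ (hg.continuousAt hU)
  exact ⟨g x', ⟨hx'U, mem_range_self x'⟩, hinj.ne hne⟩

theorem tsum_subtype_gt_eq_tsum_nat_add {α : Type*} [AddCommMonoid α] [TopologicalSpace α]
    (f : ℕ → α) (n : ℕ) : ∑' i : {i // n < i}, f i = ∑' k, f (k + (n + 1)) := by
  refine (Injective.tsum_eq (g := fun k => (⟨k + (n + 1), by omega⟩ : {i // n < i}))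
    (fun k l h => by simpa using h) fun i _ => ⟨i - (n + 1), Subtype.ext ?_⟩).symm
  show i - (n + 1) + (n + 1) = i
  have := i.2
  omega

/-- Subsets of `ℕ` are encoded as points `b` of the Cantor space `ℕ → Bool`. -/
noncomputable def subsum {E : Type*} [AddCommMonoid E] [TopologicalSpace E] (f : ℕ → E)
    (b : ℕ → Bool) : E :=
  ∑' n, {n | b n}.indicator f n

section subsum

variable {E : Type*}

theorem achievementSet_eq_range_subsum [AddCommMonoid E] [TopologicalSpace E] (f : ℕ → E) :
    achievementSet f = range (subsum f) := by
  classical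
  ext s
  constructor
  · rintro ⟨A, rfl⟩
    exact ⟨fun n => decide (n ∈ A), by simp [subsum, tsum_subtype]⟩
  · rintro ⟨b, rfl⟩
    exact ⟨{n | b n}, (tsum_subtype _ f).symm⟩

theorem continuous_subsum [NormedAddCommGroup E] [CompleteSpace E] {f : ℕ → E}
    (hf : Summable (‖f ·‖)) : Continuous (subsum f) := by
  refine continuous_tsum (fun n => ?_) hf fun n b => norm_indicator_le_norm_self _ _
  have : (fun b : ℕ → Bool => {m | b m}.indicator f n) =
      (fun t : Bool => if t then f n else 0) ∘ fun b => b n := by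
    ext b
    cases b n <;> simp [Set.indicator_apply]
  rw [this]
  exact continuous_of_discreteTopology.comp (continuous_apply n)

theorem subsum_prodMk {F : Type*} [NormedAddCommGroup E] [CompleteSpace E] [NormedAddCommGroup F]
    [CompleteSpace F] {f : ℕ → E} {g : ℕ → F} (hf : Summable f) (hg : Summable g)
    (b : ℕ → Bool) : subsum (fun n => (f n, g n)) b = (subsum f b, subsum g b) := by
  rw [subsum, subsum, subsum, ← ((hf.indicator _).hasSum.prodMk (hg.indicator _).hasSum).tsum_eq]
  congr 1
  ext n <;> by_cases h : b n <;> simp [h]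

theorem subsum_sub_subsum {f : ℕ → ℝ} (hf : Summable f) (a b : ℕ → Bool) :
    subsum f a - subsum f b = ∑' k, (((a k).toNat : ℝ) - (b k).toNat) * f k := by
  rw [subsum, subsum, ← (hf.indicator _).tsum_sub (hf.indicator _)]
  congr 1
  ext k
  cases ha : a k <;> cases hb : b k <;> simp [ha, hb]

end subsum

theorem Summable.norm_prodMk {E F : Type*} [SeminormedAddCommGroup E] [SeminormedAddCommGroup F]
    {f : ℕ → E} {g : ℕ → F} (hf : Summable (‖f ·‖)) (hg : Summable (‖g ·‖)) :
    Summable fun n => ‖(f n, g n)‖ :=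
  (hf.add hg).of_nonneg_of_le (fun _ => norm_nonneg _) fun n =>
    max_le_add_of_nonneg (norm_nonneg (f n)) (norm_nonneg (g n))


theorem summable_one_div_two_pow_succ : Summable fun k : ℕ => (1 : ℝ) / 2 ^ (k + 1) := by
  simpa only [one_div_pow] using (summable_nat_add_iff 1).2 summable_geometric_two

theorem tsum_one_div_two_pow_nat_add (n : ℕ) :
    ∑' k : ℕ, (1 : ℝ) / 2 ^ (k + (n + 1) + 1) = 1 / 2 ^ (n + 1) := by
  rw [← tsum_geometric_two' (1 / 2 ^ (n + 1))]
  congr 1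
  ext k
  ring

theorem eq_neg_one_of_tsum_div_two_pow_eq_zero {d : ℕ → ℝ} {n : ℕ} (hd : ∀ k, |d k| ≤ 1)
    (hlt : ∀ k < n, d k = 0) (hn : d n = 1) (h : ∑' k, d k / 2 ^ (k + 1) = 0) :
    ∀ k, n < k → d k = -1 := by
  have hs : Summable fun k => d k / 2 ^ (k + 1) :=
    summable_one_div_two_pow_succ.of_norm_bounded fun k => by
      rw [Real.norm_eq_abs, abs_div, abs_of_pos (by positivity : (0 : ℝ) < 2 ^ (k + 1))]
      exact div_le_div_of_nonneg_right (hd k) (by positivity)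
  have hhead : ∑ k ∈ Finset.range (n + 1), d k / 2 ^ (k + 1) = 1 / 2 ^ (n + 1) := by
    rw [Finset.sum_range_succ, Finset.sum_eq_zero fun k hk => by
      rw [hlt k (Finset.mem_range.1 hk), zero_div], hn, zero_add]
  have htail : ∑' k, d (k + (n + 1)) / 2 ^ (k + (n + 1) + 1) = -(1 / 2 ^ (n + 1)) := by
    have := hs.sum_add_tsum_nat_add (n + 1)
    rw [hhead, h] at this
    linarith
  have hzero : HasSum (fun k => (1 + d (k + (n + 1))) / 2 ^ (k + (n + 1) + 1)) 0 := by
    have := ((summable_nat_add_iff (n + 1)).2 summable_one_div_two_pow_succ).hasSum.add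
      ((summable_nat_add_iff (n + 1)).2 hs).hasSum
    rw [tsum_one_div_two_pow_nat_add, htail, add_neg_cancel] at this
    simpa only [add_div] using this
  have hnonneg : ∀ k, 0 ≤ (1 + d (k + (n + 1))) / 2 ^ (k + (n + 1) + 1) := fun k =>
    div_nonneg (by linarith [(abs_le.1 (hd (k + (n + 1)))).1]) (by positivity)
  intro k hk
  obtain ⟨j, rfl⟩ : ∃ j, k = j + (n + 1) := ⟨k - (n + 1), by omega⟩
  have := congrFun ((hasSum_zero_iff_of_nonneg hnonneg).1 hzero) j
  rw [Pi.zero_apply, div_eq_zero_iff] at this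
  rcases this with h | h
  · linarith
  · exact absurd h (by positivity)

theorem tsum_mul_eq_sub_tsum_nat_add {d y : ℕ → ℝ} {n : ℕ} (hy : Summable y)
    (hlt : ∀ k < n, d k = 0) (hn : d n = 1) (hgt : ∀ k, n < k → d k = -1) :
    ∑' k, d k * y k = y n - ∑' k, y (k + (n + 1)) := by
  have htail : ∀ k, d (k + (n + 1)) * y (k + (n + 1)) = -y (k + (n + 1)) := fun k => by
    rw [hgt _ (by omega), neg_one_mul]
  have hs : Summable fun k => d k * y k :=
    (summable_nat_add_iff (n + 1)).1 <| by
      simpa only [htail] using ((summable_nat_add_iff (n + 1)).2 hy).neg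
  rw [← hs.sum_add_tsum_nat_add (n + 1), Finset.sum_range_succ, Finset.sum_eq_zero fun k hk => by
    rw [hlt k (Finset.mem_range.1 hk), zero_mul], hn]
  simp only [htail, tsum_neg]
  ring

theorem injective_subsum_dyadic {y : ℕ → ℝ} (hy : Summable y)
    (hne : ∀ n : ℕ, y n ≠ ∑' i : {i : ℕ // n < i}, y i) :
    Injective (subsum fun n => ((1 / 2 ^ (n + 1) : ℝ), y n)) := by
  intro a b hab
  by_contra hab'
  obtain ⟨n, hlt, hn⟩ : ∃ n, (∀ k < n, a k = b k) ∧ a n ≠ b n :=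
    ⟨Nat.find (Function.ne_iff.1 hab'), fun k hk => not_not.1 (Nat.find_min _ hk),
      Nat.find_spec (Function.ne_iff.1 hab')⟩
  wlog ha : a n = true generalizing a b
  · exact this hab.symm (Ne.symm hab') (fun k hk => (hlt k hk).symm) hn.symm
      (by simpa [ha] using hn.symm)
  have hb : b n = false := by simpa [ha] using hn.symm
  rw [subsum_prodMk summable_one_div_two_pow_succ hy,
    subsum_prodMk summable_one_div_two_pow_succ hy, Prod.mk.injEq] at hab
  set d : ℕ → ℝ := fun k => (a k).toNat - (b k).toNat
  have hd : ∀ k, |d k| ≤ 1 := fun k => by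
    cases ha : a k <;> cases hb : b k <;> simp [d, ha, hb]
  have hdlt : ∀ k < n, d k = 0 := fun k hk => by simp [d, hlt k hk]
  have hdn : d n = 1 := by simp [d, ha, hb]
  have hw : ∑' k, d k / 2 ^ (k + 1) = 0 := by
    rw [← sub_eq_zero.2 hab.1, subsum_sub_subsum summable_one_div_two_pow_succ]
    simp only [mul_one_div, d]
  apply hne n
  rw [tsum_subtype_gt_eq_tsum_nat_add, ← sub_eq_zero, ← tsum_mul_eq_sub_tsum_nat_add hy hdlt hdn
    (eq_neg_one_of_tsum_div_two_pow_eq_zero hd hdlt hdn hw), ← subsum_sub_subsum hy, hab.2,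
    sub_self]

theorem stmt_6 (y : ℕ → ℝ) (hy : Summable fun n => |y n|)
    (hne : ∀ n : ℕ, y n ≠ ∑' i : {i : ℕ // n < i}, y i) :
    (achievementSet (fun n => ((1 / 2 ^ (n + 1) : ℝ), y n))).Nonempty ∧
    IsCompact (achievementSet (fun n => ((1 / 2 ^ (n + 1) : ℝ), y n))) ∧
    Perfect (achievementSet (fun n => ((1 / 2 ^ (n + 1) : ℝ), y n))) ∧
    IsTotallyDisconnected (achievementSet (fun n => ((1 / 2 ^ (n + 1) : ℝ), y n))) := by
  have hcont : Continuous (subsum fun n => ((1 / 2 ^ (n + 1) : ℝ), y n)) :=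
    continuous_subsum <| Summable.norm_prodMk
      summable_one_div_two_pow_succ.abs hy
  have hemb := hcont.isClosedEmbedding (injective_subsum_dyadic hy.of_abs hne)
  rw [achievementSet_eq_range_subsum]
  exact ⟨range_nonempty _, isCompact_range hcont,
    ⟨hemb.isClosed_range, preperfect_range_of_injective hcont hemb.injective⟩,
    hemb.isEmbedding.isTotallyDisconnected_range.2 inferInstance⟩
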